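/- (Theorem 2.1, part 1) Let the sequences {x_k^t}, {x_0^t}, {y_k^t} be generated by the flexible ADMM (Algorithm 2) for the consensus problem under the period-T essentially cyclic rule, and suppose Assumptions A1, A2, A3 hold. Then lim_{t→∞} ‖x_k^{t+1} − x_0^{t+1}‖ = 0 for every k = 1,…,K; moreover lim_{t→∞} ‖x_k^{t+1} − x_k^t‖ = 0, lim_{t→∞} ‖x_0^{t+1} − x_0^t‖ = 0, and lim_{t→∞} ‖y_k^{t+1} − y_k^t‖ = 0 for every k. -/

import Mathlib

open Filter
open scoped RealInnerProductSpace BigOperators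

/-- Augmented Lagrangian for the reformulated consensus problem. -/
noncomputable def augL {N K : ℕ} (g : Fin K → EuclideanSpace ℝ (Fin N) → ℝ)
    (h : EuclideanSpace ℝ (Fin N) → ℝ) (ρ : Fin K → ℝ)
    (xk : Fin K → EuclideanSpace ℝ (Fin N)) (x0 : EuclideanSpace ℝ (Fin N))
    (y : Fin K → EuclideanSpace ℝ (Fin N)) : ℝ :=
  (∑ k, g k (xk k)) + h x0 + (∑ k, ⟪y k, xk k - x0⟫)
    + ∑ k, ρ k / 2 * ‖xk k - x0‖ ^ 2

open Topology Set

/-!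
The augmented Lagrangian along the iterates is a Lyapunov function. The optimality condition of
an `x_k`-update gives `y_k = -∇g_k(x_k)` from the first iteration on, so every dual step has size
at most `L_k ‖Δx_k‖` and raises the Lagrangian by at most `L_k² / ρ_k ‖Δx_k‖²`. The primal
subproblems are strongly convex, so their minimizers lower it by `γ_k / 2 ‖Δx_k‖²` and
`(∑ ρ_k) / 2 ‖Δx₀‖²`; as `ρ_k γ_k > 2 L_k²` the net decrease controls all successive differences.
By the descent lemma and `ρ_k ≥ L_k` the Lagrangian stays above `f(x₀) ≥ inf_X f`, so the
successive differences tend to zero, and then so do the dual steps. Finally, block `k` is updated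
in every window of `T` iterations, and right after such an update `ρ_k (x_k - x₀)` is the dual
step; since `‖x_k - x₀‖` changes by at most `‖Δx_k‖ + ‖Δx₀‖` per iteration, it tends to zero.
-/

section Convexity

variable {E : Type*} [NormedAddCommGroup E] [InnerProductSpace ℝ E] {s : Set E} {m : ℝ}
  {f : E → ℝ}

lemma StrongConvexOn.add_inner_add_const (hf : StrongConvexOn s m f) (v : E) (a : ℝ) :
    StrongConvexOn s m (fun z => f z + ⟪v, z⟫ + a) := by
  have hlin : ConvexOn ℝ s (fun z => ⟪v, z⟫ + a) :=
    ((innerSL ℝ v).toLinearMap.convexOn hf.1).add_const a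
  have hsum := hf.add (uniformConvexOn_zero.2 hlin)
  rw [add_zero] at hsum
  have hfun : (fun z => f z + ⟪v, z⟫ + a) = f + fun z => ⟪v, z⟫ + a := by
    funext z; simp only [Pi.add_apply, add_assoc]
  rw [hfun]
  exact hsum

lemma StrongConvexOn.add_inner_sub_add_norm_sub_sq {G : E → ℝ} {ρ : ℝ}
    (hG : StrongConvexOn s m fun z => G z + ρ / 2 * ‖z‖ ^ 2) (v c : E) :
    StrongConvexOn s m fun z => G z + ⟪v, z - c⟫ + ρ / 2 * ‖z - c‖ ^ 2 := by
  convert hG.add_inner_add_const (v - ρ • c) (ρ / 2 * ‖c‖ ^ 2 - ⟪v, c⟫) using 2 with z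
  rw [norm_sub_sq_real, inner_sub_right, inner_sub_left, real_inner_smul_left, real_inner_comm c z]
  ring

lemma StrongConvexOn.add_sq_le_of_isMinOn (hf : StrongConvexOn s m f) {a z : E}
    (ha : a ∈ s) (hz : z ∈ s) (hmin : IsMinOn f s a) :
    f a + m / 2 * ‖z - a‖ ^ 2 ≤ f z := by
  -- compare `f a` with `f` at `(1 - b) • a + b • z` and let `b → 0⁺`
  have key : ∀ b ∈ Ioo (0 : ℝ) 1, f a + (1 - b) * (m / 2 * ‖z - a‖ ^ 2) ≤ f z := by
    rintro b ⟨hb0, hb1⟩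
    have hmix := hf.2 ha hz (sub_nonneg.2 hb1.le) hb0.le (sub_add_cancel 1 b)
    have hle := isMinOn_iff.1 hmin _ (hf.1 ha hz (sub_nonneg.2 hb1.le) hb0.le (sub_add_cancel 1 b))
    rw [norm_sub_rev] at hmix
    simp only [smul_eq_mul] at hmix
    refine le_of_mul_le_mul_left ?_ hb0
    linarith
  have hlim : Tendsto (fun b : ℝ => f a + (1 - b) * (m / 2 * ‖z - a‖ ^ 2)) (𝓝[>] 0)
      (𝓝 (f a + m / 2 * ‖z - a‖ ^ 2)) := by
    have hc : Continuous fun b : ℝ => f a + (1 - b) * (m / 2 * ‖z - a‖ ^ 2) := by fun_prop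
    simpa using (hc.tendsto 0).mono_left nhdsWithin_le_nhds
  exact le_of_tendsto hlim (eventually_of_mem (Ioo_mem_nhdsGT one_pos) key)

end Convexity

section Gradient

open InnerProductSpace

variable {E : Type*} [NormedAddCommGroup E] [InnerProductSpace ℝ E] [CompleteSpace E]

lemma HasGradientAt.add_add_smul_sub_eq_zero {g : E → ℝ} {g' v c a : E} {ρ : ℝ}
    (hg : HasGradientAt g g' a)
    (hmin : ∀ z, g a + ⟪v, a - c⟫ + ρ / 2 * ‖a - c‖ ^ 2
      ≤ g z + ⟪v, z - c⟫ + ρ / 2 * ‖z - c‖ ^ 2) :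
    g' + v + ρ • (a - c) = 0 := by
  have hsub := (hasFDerivAt_id (𝕜 := ℝ) a).sub_const c
  have hφ := (hg.hasFDerivAt.add ((innerSL ℝ v).hasFDerivAt.comp a hsub)).add
    (hsub.norm_sq.const_mul (ρ / 2))
  have hloc : IsLocalMin (fun z => g z + ⟪v, z - c⟫ + ρ / 2 * ‖z - c‖ ^ 2) a :=
    Eventually.of_forall hmin
  -- test the vanishing derivative against the vector `g' + v + ρ • (a - c)` itself
  have h0 := congrArg (fun φ : E →L[ℝ] ℝ => φ (g' + v + ρ • (a - c)))
    (hloc.hasFDerivAt_eq_zero hφ)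
  simp only [ContinuousLinearMap.comp_id, id_eq, map_sub, add_apply, toDual_apply_apply,
    coe_innerSL_apply, smul_apply, sub_apply, nsmul_eq_mul, Nat.cast_ofNat, smul_eq_mul,
    zero_apply] at h0
  rw [← inner_self_eq_zero (𝕜 := ℝ), inner_add_left, inner_add_left, real_inner_smul_left,
    inner_sub_left]
  linarith

lemma le_add_inner_add_sq_of_lipschitz_gradient {g : E → ℝ} {g' : E → E} {L : ℝ}
    (hg : ∀ z, HasGradientAt g (g' z) z) (hL : ∀ u v, ‖g' u - g' v‖ ≤ L * ‖u - v‖) (u v : E) :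
    g v ≤ g u + ⟪g' u, v - u⟫ + L / 2 * ‖v - u‖ ^ 2 := by
  set d := v - u
  -- `ψ' ≤ 0` on `[0, 1]` by the Lipschitz bound, and `ψ 1 ≤ ψ 0` is the claim
  let ψ : ℝ → ℝ := fun s => g (u + s • d) - s * ⟪g' u, d⟫ - L / 2 * ‖d‖ ^ 2 * s ^ 2
  have hψ : ∀ s, HasDerivAt ψ (⟪g' (u + s • d) - g' u, d⟫ - L * ‖d‖ ^ 2 * s) s := by
    intro s
    have hpath : HasDerivAt (fun s : ℝ => u + s • d) d s := by
      simpa using ((hasDerivAt_id s).smul_const d).const_add u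
    have hderiv := (((hg _).hasFDerivAt.comp_hasDerivAt s hpath).sub
      ((hasDerivAt_id s).mul_const ⟪g' u, d⟫)).sub
      ((hasDerivAt_pow 2 s).const_mul (L / 2 * ‖d‖ ^ 2))
    refine hderiv.congr_deriv ?_
    simp only [toDual_apply_apply, one_mul, Nat.cast_ofNat, Nat.add_one_sub_one, pow_one,
      inner_sub_left, sub_right_inj]
    ring
  have hψ' : ∀ s ∈ interior (Icc (0 : ℝ) 1), ⟪g' (u + s • d) - g' u, d⟫ - L * ‖d‖ ^ 2 * s ≤ 0 := by
    rw [interior_Icc]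
    rintro s ⟨hs0, -⟩
    have hlip : ‖g' (u + s • d) - g' u‖ ≤ L * s * ‖d‖ := by
      simpa [norm_smul, abs_of_pos hs0, mul_assoc] using hL (u + s • d) u
    have := real_inner_le_norm (g' (u + s • d) - g' u) d
    nlinarith [norm_nonneg d]
  have hanti : AntitoneOn ψ (Icc 0 1) :=
    antitoneOn_of_hasDerivWithinAt_nonpos (convex_Icc 0 1)
      (fun s _ => (hψ s).continuousAt.continuousWithinAt) (fun s _ => (hψ s).hasDerivWithinAt) hψ'
  have h01 := hanti (left_mem_Icc.2 zero_le_one) (right_mem_Icc.2 zero_le_one) zero_le_one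
  simp only [ψ, one_smul, zero_smul, add_zero, one_mul, zero_mul, one_pow, mul_one, sub_zero,
    ne_eq, OfNat.ofNat_ne_zero, not_false_eq_true, zero_pow, mul_zero, add_sub_cancel, d] at h01
  linarith

end Gradient

lemma tendsto_zero_of_le_sub_succ {F d : ℕ → ℝ} (hF : BddBelow (range F))
    (hd : ∀ n, 0 ≤ d n) (hdec : ∀ n, d n ≤ F n - F (n + 1)) : Tendsto d atTop (𝓝 0) := by
  have hlim := tendsto_atTop_ciInf (antitone_nat_of_succ_le fun n => by linarith [hd n, hdec n]) hF
  refine squeeze_zero hd hdec ?_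
  simpa using hlim.sub (hlim.comp (tendsto_add_atTop_nat 1))

lemma tendsto_zero_of_mul_sq_le {a d : ℕ → ℝ} {c : ℝ} (hc : 0 < c) (ha : ∀ n, 0 ≤ a n)
    (hd : Tendsto d atTop (𝓝 0)) (had : ∀ n, c * a n ^ 2 ≤ d n) : Tendsto a atTop (𝓝 0) := by
  have hsq : Tendsto (fun n => a n ^ 2) atTop (𝓝 0) :=
    squeeze_zero (fun n => sq_nonneg _) (fun n => (le_div_iff₀' hc).2 (had n))
      (by simpa using hd.div_const c)
  simpa [Real.sqrt_sq (ha _)] using hsq.sqrt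

lemma le_add_sum_Ico_of_le_add {r δ : ℕ → ℝ} (hstep : ∀ n, r (n + 1) ≤ r n + δ n) {m n : ℕ}
    (hmn : m ≤ n) : r n ≤ r m + ∑ i ∈ Finset.Ico m n, δ i := by
  induction n, hmn using Nat.le_induction with
  | base => simp
  | succ n hmn ih =>
    rw [Finset.sum_Ico_succ_top hmn]
    linarith [hstep n]

lemma tendsto_zero_of_le_add_of_le_within_window {r δ ε : ℕ → ℝ} {T : ℕ} (hr : ∀ n, 0 ≤ r n)
    (hδ0 : ∀ n, 0 ≤ δ n) (hε0 : ∀ n, 0 ≤ ε n) (hstep : ∀ n, r (n + 1) ≤ r n + δ n)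
    (hwin : ∀ n, ∃ s, n ≤ s ∧ s < n + T ∧ r (s + 1) ≤ ε s)
    (hδ : Tendsto δ atTop (𝓝 0)) (hε : Tendsto ε atTop (𝓝 0)) : Tendsto r atTop (𝓝 0) := by
  have hbound : ∀ n, r (n + T) ≤ ∑ j ∈ Finset.range T, (ε (n + j) + δ (n + j)) := by
    intro n
    obtain ⟨s, hns, hsT, hs⟩ := hwin n
    have hIco : ∀ f : ℕ → ℝ, ∑ j ∈ Finset.range T, f (n + j) = ∑ i ∈ Finset.Ico n (n + T), f i :=
      fun f => by rw [Finset.sum_Ico_eq_sum_range, add_tsub_cancel_left]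
    have hε_le : ε s ≤ ∑ i ∈ Finset.Ico n (n + T), ε i :=
      Finset.single_le_sum (fun i _ => hε0 i) (Finset.mem_Ico.2 ⟨hns, hsT⟩)
    have hδ_le : ∑ i ∈ Finset.Ico (s + 1) (n + T), δ i ≤ ∑ i ∈ Finset.Ico n (n + T), δ i :=
      Finset.sum_le_sum_of_subset_of_nonneg (Finset.Ico_subset_Ico (by omega) le_rfl)
        fun i _ _ => hδ0 i
    rw [Finset.sum_add_distrib, hIco, hIco]
    linarith [le_add_sum_Ico_of_le_add hstep (show s + 1 ≤ n + T by omega)]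
  have hlim : Tendsto (fun n => ∑ j ∈ Finset.range T, (ε (n + j) + δ (n + j))) atTop (𝓝 0) := by
    simpa using tendsto_finsetSum (Finset.range T) fun j _ =>
      (hε.comp (tendsto_add_atTop_nat j)).add (hδ.comp (tendsto_add_atTop_nat j))
  exact (tendsto_add_atTop_iff_nat T).1 (squeeze_zero (fun n => hr _) hbound hlim)

section ADMM

variable {N K : ℕ} {g : Fin K → EuclideanSpace ℝ (Fin N) → ℝ} {h : EuclideanSpace ℝ (Fin N) → ℝ}
  {ρ : Fin K → ℝ}

lemma augL_eq_add_sum (xs : Fin K → EuclideanSpace ℝ (Fin N)) (c : EuclideanSpace ℝ (Fin N))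
    (ys : Fin K → EuclideanSpace ℝ (Fin N)) :
    augL g h ρ xs c ys
      = h c + ∑ k, (g k (xs k) + ⟪ys k, xs k - c⟫ + ρ k / 2 * ‖xs k - c‖ ^ 2) := by
  simp only [augL, Finset.sum_add_distrib]
  ring

lemma augL_eq_augL_add_sum_inner (xs : Fin K → EuclideanSpace ℝ (Fin N))
    (c : EuclideanSpace ℝ (Fin N)) (ys ys' : Fin K → EuclideanSpace ℝ (Fin N)) :
    augL g h ρ xs c ys' = augL g h ρ xs c ys + ∑ k, ⟪ys' k - ys k, xs k - c⟫ := by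
  simp only [augL, inner_sub_left, Finset.sum_sub_distrib]
  ring

lemma strongConvexOn_augL {s : Set (EuclideanSpace ℝ (Fin N))} (hh : ConvexOn ℝ s h)
    (xs ys : Fin K → EuclideanSpace ℝ (Fin N)) :
    StrongConvexOn s (∑ k, ρ k) fun c => augL g h ρ xs c ys := by
  have hq : StrongConvexOn s (∑ k, ρ k) fun c => h c + (∑ k, ρ k) / 2 * ‖c‖ ^ 2 :=
    strongConvexOn_iff_convex.2 (by simpa using hh)
  have hfun : (fun c => augL g h ρ xs c ys) = fun c => h c + (∑ k, ρ k) / 2 * ‖c‖ ^ 2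
      + ⟪-∑ k, (ys k + ρ k • xs k), c⟫
      + ∑ k, (g k (xs k) + ⟪ys k, xs k⟫ + ρ k / 2 * ‖xs k‖ ^ 2) := by
    funext c
    rw [inner_neg_left, sum_inner]
    simp only [augL, norm_sub_sq_real, inner_sub_right, inner_add_right, real_inner_smul_right,
      Finset.sum_add_distrib, Finset.sum_sub_distrib, mul_add, mul_sub, real_inner_comm c]
    rw [Finset.sum_div, Finset.sum_mul]
    simp only [← mul_assoc, div_mul_cancel₀ _ (two_ne_zero' ℝ)]
    ring
  rw [hfun]
  exact hq.add_inner_add_const _ _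

/-- The iterates of the flexible ADMM (Algorithm 2): `C (t + 1)` is the set of blocks updated at
iteration `t + 1`, where `none` stands for `x₀` and `some k` for `x_k`. -/
structure IsFlexibleADMM (g : Fin K → EuclideanSpace ℝ (Fin N) → ℝ)
    (h : EuclideanSpace ℝ (Fin N) → ℝ) (X : Set (EuclideanSpace ℝ (Fin N))) (ρ : Fin K → ℝ)
    (x : ℕ → Fin K → EuclideanSpace ℝ (Fin N)) (x0 : ℕ → EuclideanSpace ℝ (Fin N))
    (y : ℕ → Fin K → EuclideanSpace ℝ (Fin N)) (C : ℕ → Finset (Option (Fin K))) : Prop where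
  C_one : C 1 = Finset.univ
  x0_update : ∀ t : ℕ,
    (none ∈ C (t + 1) → x0 (t + 1) ∈ X ∧ ∀ z ∈ X,
      augL g h ρ (x t) (x0 (t + 1)) (y t) ≤ augL g h ρ (x t) z (y t)) ∧
    (none ∉ C (t + 1) → x0 (t + 1) = x0 t)
  x_update : ∀ (t : ℕ) (k : Fin K),
    (some k ∈ C (t + 1) → ∀ z : EuclideanSpace ℝ (Fin N),
      g k (x (t + 1) k) + ⟪y t k, x (t + 1) k - x0 (t + 1)⟫
          + ρ k / 2 * ‖x (t + 1) k - x0 (t + 1)‖ ^ 2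
        ≤ g k z + ⟪y t k, z - x0 (t + 1)⟫ + ρ k / 2 * ‖z - x0 (t + 1)‖ ^ 2) ∧
    (some k ∉ C (t + 1) → x (t + 1) k = x t k)
  y_update : ∀ (t : ℕ) (k : Fin K),
    (some k ∈ C (t + 1) → y (t + 1) k = y t k + ρ k • (x (t + 1) k - x0 (t + 1))) ∧
    (some k ∉ C (t + 1) → y (t + 1) k = y t k)

namespace IsFlexibleADMM

variable {g' : Fin K → EuclideanSpace ℝ (Fin N) → EuclideanSpace ℝ (Fin N)}
  {X : Set (EuclideanSpace ℝ (Fin N))} {Lg γ : Fin K → ℝ}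
  {x y : ℕ → Fin K → EuclideanSpace ℝ (Fin N)} {x0 : ℕ → EuclideanSpace ℝ (Fin N)}
  {C : ℕ → Finset (Option (Fin K))} {t : ℕ} {k : Fin K}

lemma y_succ_sub (hA : IsFlexibleADMM g h X ρ x x0 y C) (hk : some k ∈ C (t + 1)) :
    y (t + 1) k - y t k = ρ k • (x (t + 1) k - x0 (t + 1)) := by
  rw [(hA.y_update t k).1 hk, add_sub_cancel_left]

lemma y_succ_eq_neg_grad (hA : IsFlexibleADMM g h X ρ x x0 y C)
    (hgrad : ∀ k z, HasGradientAt (g k) (g' k z) z) (hk : some k ∈ C (t + 1)) :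
    y (t + 1) k = -g' k (x (t + 1) k) := by
  rw [(hA.y_update t k).1 hk, eq_neg_iff_add_eq_zero, add_comm, ← add_assoc]
  exact (hgrad k _).add_add_smul_sub_eq_zero ((hA.x_update t k).1 hk)

lemma y_eq_neg_grad (hA : IsFlexibleADMM g h X ρ x x0 y C)
    (hgrad : ∀ k z, HasGradientAt (g k) (g' k z) z) (ht : 1 ≤ t) (k : Fin K) :
    y t k = -g' k (x t k) := by
  induction t, ht using Nat.le_induction with
  | base => exact hA.y_succ_eq_neg_grad (t := 0) hgrad (by simp [hA.C_one])
  | succ t _ ih =>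
    by_cases hk : some k ∈ C (t + 1)
    · exact hA.y_succ_eq_neg_grad hgrad hk
    · rw [(hA.y_update t k).2 hk, (hA.x_update t k).2 hk, ih]

lemma x0_mem (hA : IsFlexibleADMM g h X ρ x x0 y C) (ht : 1 ≤ t) : x0 t ∈ X := by
  induction t, ht using Nat.le_induction with
  | base => exact ((hA.x0_update 0).1 (by simp [hA.C_one])).1
  | succ t _ ih =>
    by_cases h0 : none ∈ C (t + 1)
    · exact ((hA.x0_update t).1 h0).1
    · rwa [(hA.x0_update t).2 h0]

lemma norm_y_succ_sub_le (hA : IsFlexibleADMM g h X ρ x x0 y C)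
    (hgrad : ∀ k z, HasGradientAt (g k) (g' k z) z)
    (hLip : ∀ k u v, ‖g' k u - g' k v‖ ≤ Lg k * ‖u - v‖) (hL : 0 ≤ Lg k) (ht : 1 ≤ t) :
    ‖y (t + 1) k - y t k‖ ≤ Lg k * ‖x (t + 1) k - x t k‖ := by
  by_cases hk : some k ∈ C (t + 1)
  · rw [hA.y_succ_eq_neg_grad hgrad hk, hA.y_eq_neg_grad hgrad ht, neg_sub_neg, norm_sub_rev]
    exact hLip k _ _
  · rw [(hA.y_update t k).2 hk, sub_self, norm_zero]
    positivity

lemma augL_x_succ_add_le (hA : IsFlexibleADMM g h X ρ x x0 y C)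
    (hstrong : ∀ k, StrongConvexOn univ (γ k) fun z => g k z + ρ k / 2 * ‖z‖ ^ 2) (t : ℕ) :
    augL g h ρ (x (t + 1)) (x0 (t + 1)) (y t) + ∑ k, γ k / 2 * ‖x (t + 1) k - x t k‖ ^ 2
      ≤ augL g h ρ (x t) (x0 (t + 1)) (y t) := by
  rw [augL_eq_add_sum, augL_eq_add_sum, add_assoc, ← Finset.sum_add_distrib]
  refine add_le_add le_rfl (Finset.sum_le_sum fun k _ => ?_)
  by_cases hk : some k ∈ C (t + 1)
  · rw [norm_sub_rev (x (t + 1) k) (x t k)]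
    exact ((hstrong k).add_inner_sub_add_norm_sub_sq (y t k) (x0 (t + 1))).add_sq_le_of_isMinOn
      trivial trivial (isMinOn_univ_iff.2 ((hA.x_update t k).1 hk))
  · simp [(hA.x_update t k).2 hk]

lemma augL_x0_succ_add_le (hA : IsFlexibleADMM g h X ρ x x0 y C)
    (hconv : ConvexOn ℝ univ h) (hX : Convex ℝ X) (ht : 1 ≤ t) :
    augL g h ρ (x t) (x0 (t + 1)) (y t) + (∑ k, ρ k) / 2 * ‖x0 (t + 1) - x0 t‖ ^ 2
      ≤ augL g h ρ (x t) (x0 t) (y t) := by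
  by_cases h0 : none ∈ C (t + 1)
  · obtain ⟨hmem, hmin⟩ := (hA.x0_update t).1 h0
    rw [norm_sub_rev]
    exact (strongConvexOn_augL (hconv.subset (subset_univ X) hX) (x t) (y t)).add_sq_le_of_isMinOn
      hmem (hA.x0_mem ht) (isMinOn_iff.2 hmin)
  · simp [(hA.x0_update t).2 h0]

lemma augL_y_succ_le (hA : IsFlexibleADMM g h X ρ x x0 y C)
    (hgrad : ∀ k z, HasGradientAt (g k) (g' k z) z)
    (hLip : ∀ k u v, ‖g' k u - g' k v‖ ≤ Lg k * ‖u - v‖) (hL : ∀ k, 0 ≤ Lg k)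
    (hρ : ∀ k, 0 < ρ k) (ht : 1 ≤ t) :
    augL g h ρ (x (t + 1)) (x0 (t + 1)) (y (t + 1))
      ≤ augL g h ρ (x (t + 1)) (x0 (t + 1)) (y t)
        + ∑ k, Lg k ^ 2 / ρ k * ‖x (t + 1) k - x t k‖ ^ 2 := by
  rw [augL_eq_augL_add_sum_inner _ _ (y t)]
  refine add_le_add le_rfl (Finset.sum_le_sum fun k _ => ?_)
  by_cases hk : some k ∈ C (t + 1)
  · have hdy := hA.norm_y_succ_sub_le hgrad hLip (hL k) ht (k := k)
    rw [hA.y_succ_sub hk, norm_smul, Real.norm_of_nonneg (hρ k).le] at hdy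
    rw [hA.y_succ_sub hk, real_inner_smul_left, real_inner_self_eq_norm_sq, div_mul_eq_mul_div,
      le_div_iff₀ (hρ k)]
    nlinarith [mul_nonneg (hρ k).le (norm_nonneg (x (t + 1) k - x0 (t + 1)))]
  · rw [(hA.y_update t k).2 hk, sub_self, inner_zero_left]
    have := hρ k
    positivity

lemma augL_succ_add_le (hA : IsFlexibleADMM g h X ρ x x0 y C)
    (hgrad : ∀ k z, HasGradientAt (g k) (g' k z) z)
    (hLip : ∀ k u v, ‖g' k u - g' k v‖ ≤ Lg k * ‖u - v‖) (hL : ∀ k, 0 ≤ Lg k)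
    (hconv : ConvexOn ℝ univ h) (hX : Convex ℝ X) (hρ : ∀ k, 0 < ρ k)
    (hstrong : ∀ k, StrongConvexOn univ (γ k) fun z => g k z + ρ k / 2 * ‖z‖ ^ 2) (ht : 1 ≤ t) :
    augL g h ρ (x (t + 1)) (x0 (t + 1)) (y (t + 1))
        + ((∑ k, ρ k) / 2 * ‖x0 (t + 1) - x0 t‖ ^ 2
          + ∑ k, (γ k / 2 - Lg k ^ 2 / ρ k) * ‖x (t + 1) k - x t k‖ ^ 2)
      ≤ augL g h ρ (x t) (x0 t) (y t) := by
  have hx0 := hA.augL_x0_succ_add_le hconv hX ht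
  have hx := hA.augL_x_succ_add_le hstrong t
  have hy := hA.augL_y_succ_le hgrad hLip hL hρ ht
  simp only [sub_mul, Finset.sum_sub_distrib]
  linarith

lemma le_augL (hA : IsFlexibleADMM g h X ρ x x0 y C)
    (hgrad : ∀ k z, HasGradientAt (g k) (g' k z) z)
    (hLip : ∀ k u v, ‖g' k u - g' k v‖ ≤ Lg k * ‖u - v‖) (hLρ : ∀ k, Lg k ≤ ρ k) (ht : 1 ≤ t) :
    (∑ k, g k (x0 t)) + h (x0 t) ≤ augL g h ρ (x t) (x0 t) (y t) := by
  rw [augL_eq_add_sum, add_comm]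
  refine add_le_add le_rfl (Finset.sum_le_sum fun k _ => ?_)
  have hdesc := le_add_inner_add_sq_of_lipschitz_gradient (hgrad k) (hLip k) (x t k) (x0 t)
  rw [hA.y_eq_neg_grad hgrad ht, inner_neg_left, ← inner_neg_right, neg_sub, norm_sub_rev]
  linarith [mul_le_mul_of_nonneg_right (hLρ k) (sq_nonneg ‖x0 t - x t k‖)]

lemma tendsto_sufficient_decrease (hA : IsFlexibleADMM g h X ρ x x0 y C)
    (hgrad : ∀ k z, HasGradientAt (g k) (g' k z) z)
    (hLip : ∀ k u v, ‖g' k u - g' k v‖ ≤ Lg k * ‖u - v‖) (hL : ∀ k, 0 ≤ Lg k)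
    (hconv : ConvexOn ℝ univ h) (hX : Convex ℝ X) (hρ : ∀ k, 0 < ρ k)
    (hstrong : ∀ k, StrongConvexOn univ (γ k) fun z => g k z + ρ k / 2 * ‖z‖ ^ 2)
    (hLρ : ∀ k, Lg k ≤ ρ k) (hc : ∀ k, 0 ≤ γ k / 2 - Lg k ^ 2 / ρ k)
    (hbdd : BddBelow ((fun z => (∑ k, g k z) + h z) '' X)) :
    Tendsto (fun t => (∑ k, ρ k) / 2 * ‖x0 (t + 2) - x0 (t + 1)‖ ^ 2
      + ∑ k, (γ k / 2 - Lg k ^ 2 / ρ k) * ‖x (t + 2) k - x (t + 1) k‖ ^ 2) atTop (𝓝 0) := by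
  obtain ⟨B, hB⟩ := hbdd
  -- the Lyapunov sequence starts at `t = 1`, where `y = -∇g(x)` and `x₀ ∈ X` first hold
  refine tendsto_zero_of_le_sub_succ
    (F := fun t => augL g h ρ (x (t + 1)) (x0 (t + 1)) (y (t + 1))) ⟨B, ?_⟩ (fun t => ?_)
    (fun t => ?_)
  · rintro _ ⟨t, rfl⟩
    exact (hB ⟨x0 (t + 1), hA.x0_mem le_add_self, rfl⟩).trans
      (hA.le_augL hgrad hLip hLρ le_add_self)
  · have hσ : 0 ≤ ∑ k, ρ k := Finset.sum_nonneg fun k _ => (hρ k).le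
    exact add_nonneg (by positivity) (Finset.sum_nonneg fun k _ => mul_nonneg (hc k) (sq_nonneg _))
  · linarith [hA.augL_succ_add_le hgrad hLip hL hconv hX hρ hstrong (t := t + 1) le_add_self]

lemma tendsto_norm_x_sub_x0 {T : ℕ} (hA : IsFlexibleADMM g h X ρ x x0 y C) (hρ : 0 < ρ k)
    (hcyc : ∀ (t : ℕ) (j : Option (Fin K)), ∃ i, 1 ≤ i ∧ i ≤ T ∧ j ∈ C (t + i))
    (hx : Tendsto (fun t => ‖x (t + 1) k - x t k‖) atTop (𝓝 0))
    (hx0 : Tendsto (fun t => ‖x0 (t + 1) - x0 t‖) atTop (𝓝 0))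
    (hy : Tendsto (fun t => ‖y (t + 1) k - y t k‖) atTop (𝓝 0)) :
    Tendsto (fun t => ‖x t k - x0 t‖) atTop (𝓝 0) := by
  refine tendsto_zero_of_le_add_of_le_within_window (T := T)
    (δ := fun t => ‖x (t + 1) k - x t k‖ + ‖x0 (t + 1) - x0 t‖)
    (ε := fun t => ‖y (t + 1) k - y t k‖ / ρ k) (fun _ => norm_nonneg _) (fun _ => by positivity)
    (fun _ => by positivity) (fun t => ?_) (fun t => ?_) (by simpa using hx.add hx0)
    (by simpa using hy.div_const (ρ k))
  · calc ‖x (t + 1) k - x0 (t + 1)‖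
        = ‖(x t k - x0 t) + (x (t + 1) k - x t k) - (x0 (t + 1) - x0 t)‖ := by congr 1; abel
      _ ≤ ‖x t k - x0 t‖ + ‖x (t + 1) k - x t k‖ + ‖x0 (t + 1) - x0 t‖ :=
        (norm_sub_le _ _).trans (add_le_add (norm_add_le _ _) le_rfl)
      _ = _ := add_assoc _ _ _
  · obtain ⟨i, hi1, hiT, hi⟩ := hcyc t (some k)
    obtain ⟨j, rfl⟩ : ∃ j, i = j + 1 := ⟨i - 1, by omega⟩
    refine ⟨t + j, by omega, by omega, ?_⟩
    rw [le_div_iff₀ hρ, hA.y_succ_sub (t := t + j) hi, norm_smul, Real.norm_of_nonneg hρ.le,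
      mul_comm]

end IsFlexibleADMM

end ADMM

theorem theorem2_1_part1_general
    {N K : ℕ} (hK : 1 ≤ K)
    (g : Fin K → EuclideanSpace ℝ (Fin N) → ℝ)
    (g' : Fin K → EuclideanSpace ℝ (Fin N) → EuclideanSpace ℝ (Fin N))
    (h : EuclideanSpace ℝ (Fin N) → ℝ)
    (X : Set (EuclideanSpace ℝ (Fin N)))
    (Lg ρ γ : Fin K → ℝ)
    (x : ℕ → Fin K → EuclideanSpace ℝ (Fin N))
    (x0 : ℕ → EuclideanSpace ℝ (Fin N))
    (y : ℕ → Fin K → EuclideanSpace ℝ (Fin N))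
    (C : ℕ → Finset (Option (Fin K)))
    -- Assumption A1
    (hgrad : ∀ k z, HasGradientAt (g k) (g' k z) z)
    (hLpos : ∀ k, 0 < Lg k)
    (hLip : ∀ k u v, ‖g' k u - g' k v‖ ≤ Lg k * ‖u - v‖)
    (hconv : ConvexOn ℝ Set.univ h)
    (hXcv : Convex ℝ X)
    (hρ : ∀ k, 0 < ρ k)
    -- Assumption A2
    (hstrong : ∀ k, StrongConvexOn Set.univ (γ k)
      (fun z : EuclideanSpace ℝ (Fin N) => g k z + ρ k / 2 * ‖z‖ ^ 2))
    (hA2b : ∀ k, 2 * Lg k ^ 2 < ρ k * γ k)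
    (hA2c : ∀ k, Lg k ≤ ρ k)
    -- Assumption A3 : `f` is bounded below over `X`
    (hbdd : BddBelow ((fun z => (∑ k, g k z) + h z) '' X))
    -- Algorithm 2
    (hC1 : C 1 = Finset.univ)
    (hx0upd : ∀ t : ℕ,
      (none ∈ C (t + 1) → x0 (t + 1) ∈ X ∧ ∀ z ∈ X,
        augL g h ρ (x t) (x0 (t + 1)) (y t) ≤ augL g h ρ (x t) z (y t)) ∧
      (none ∉ C (t + 1) → x0 (t + 1) = x0 t))
    (hxupd : ∀ (t : ℕ) (k : Fin K),
      (some k ∈ C (t + 1) → ∀ z : EuclideanSpace ℝ (Fin N),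
        g k (x (t + 1) k) + ⟪y t k, x (t + 1) k - x0 (t + 1)⟫
            + ρ k / 2 * ‖x (t + 1) k - x0 (t + 1)‖ ^ 2
          ≤ g k z + ⟪y t k, z - x0 (t + 1)⟫ + ρ k / 2 * ‖z - x0 (t + 1)‖ ^ 2) ∧
      (some k ∉ C (t + 1) → x (t + 1) k = x t k))
    (hyupd : ∀ (t : ℕ) (k : Fin K),
      (some k ∈ C (t + 1) → y (t + 1) k = y t k + ρ k • (x (t + 1) k - x0 (t + 1))) ∧
      (some k ∉ C (t + 1) → y (t + 1) k = y t k))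
    -- period-T essentially cyclic rule
    (T : ℕ)
    (hcyc : ∀ (t : ℕ) (j : Option (Fin K)), ∃ i, 1 ≤ i ∧ i ≤ T ∧ j ∈ C (t + i))
    :
    (∀ k : Fin K,
      Tendsto (fun t : ℕ => ‖x (t + 1) k - x0 (t + 1)‖) atTop (nhds 0)) ∧
    (∀ k : Fin K,
      Tendsto (fun t : ℕ => ‖x (t + 1) k - x t k‖) atTop (nhds 0)) ∧
    Tendsto (fun t : ℕ => ‖x0 (t + 1) - x0 t‖) atTop (nhds 0) ∧
    (∀ k : Fin K,
      Tendsto (fun t : ℕ => ‖y (t + 1) k - y t k‖) atTop (nhds 0)) := by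
  have hA : IsFlexibleADMM g h X ρ x x0 y C := ⟨hC1, hx0upd, hxupd, hyupd⟩
  have hL : ∀ k, 0 ≤ Lg k := fun k => (hLpos k).le
  have hc : ∀ k, 0 < γ k / 2 - Lg k ^ 2 / ρ k := fun k => by
    rw [sub_pos, div_lt_div_iff₀ (hρ k) two_pos]
    linarith [hA2b k]
  have hσ : 0 < (∑ k, ρ k) / 2 :=
    half_pos (Finset.sum_pos (fun k _ => hρ k) ⟨⟨0, hK⟩, Finset.mem_univ _⟩)
  have hdec := hA.tendsto_sufficient_decrease hgrad hLip hL hconv hXcv hρ hstrong hA2c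
    (fun k => (hc k).le) hbdd
  have hterm_nonneg : ∀ t k, 0 ≤ (γ k / 2 - Lg k ^ 2 / ρ k) * ‖x (t + 2) k - x (t + 1) k‖ ^ 2 :=
    fun t k => mul_nonneg (hc k).le (sq_nonneg _)
  have hx : ∀ k, Tendsto (fun t => ‖x (t + 1) k - x t k‖) atTop (𝓝 0) := fun k =>
    (tendsto_add_atTop_iff_nat 1).1 <| tendsto_zero_of_mul_sq_le (hc k) (fun _ => norm_nonneg _)
      hdec fun t => le_add_of_nonneg_of_le (by positivity) <|
        Finset.single_le_sum (fun j _ => hterm_nonneg t j) (Finset.mem_univ k)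
  have hx0 : Tendsto (fun t => ‖x0 (t + 1) - x0 t‖) atTop (𝓝 0) :=
    (tendsto_add_atTop_iff_nat 1).1 <| tendsto_zero_of_mul_sq_le hσ (fun _ => norm_nonneg _)
      hdec fun t => le_add_of_nonneg_right (Finset.sum_nonneg fun k _ => hterm_nonneg t k)
  have hy : ∀ k, Tendsto (fun t => ‖y (t + 1) k - y t k‖) atTop (𝓝 0) := fun k =>
    squeeze_zero' (Eventually.of_forall fun _ => norm_nonneg _)
      (eventually_atTop.2 ⟨1, fun t ht => hA.norm_y_succ_sub_le hgrad hLip (hL k) ht⟩)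
      (by simpa using (hx k).const_mul (Lg k))
  refine ⟨fun k => ?_, hx, hx0, hy⟩
  exact (tendsto_add_atTop_iff_nat 1).2 (hA.tendsto_norm_x_sub_x0 (hρ k) hcyc (hx k) hx0 (hy k))

/-- **Theorem 2.1, part 1.**  For the flexible ADMM (Algorithm 2) on the consensus problem
under the period-`T` essentially cyclic rule and Assumptions A1–A3:
`‖x_k^{t+1} − x_0^{t+1}‖ → 0`, `‖x_k^{t+1} − x_k^t‖ → 0`, `‖x_0^{t+1} − x_0^t‖ → 0` and
`‖y_k^{t+1} − y_k^t‖ → 0` as `t → ∞`. -/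
theorem theorem2_1_part1
    {N K : ℕ} (hK : 1 ≤ K)
    (g : Fin K → EuclideanSpace ℝ (Fin N) → ℝ)
    (g' : Fin K → EuclideanSpace ℝ (Fin N) → EuclideanSpace ℝ (Fin N))
    (h : EuclideanSpace ℝ (Fin N) → ℝ)
    (X : Set (EuclideanSpace ℝ (Fin N)))
    (Lg ρ γ : Fin K → ℝ)
    (x : ℕ → Fin K → EuclideanSpace ℝ (Fin N))
    (x0 : ℕ → EuclideanSpace ℝ (Fin N))
    (y : ℕ → Fin K → EuclideanSpace ℝ (Fin N))
    (C : ℕ → Finset (Option (Fin K)))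
    -- Assumption A1
    (hgrad : ∀ k z, HasGradientAt (g k) (g' k z) z)
    (hLpos : ∀ k, 0 < Lg k)
    (hLip : ∀ k u v, ‖g' k u - g' k v‖ ≤ Lg k * ‖u - v‖)
    (hconv : ConvexOn ℝ Set.univ h)
    (hXne : X.Nonempty) (hXcl : IsClosed X) (hXcv : Convex ℝ X)
    (hρ : ∀ k, 0 < ρ k)
    -- Assumption A2
    (hγpos : ∀ k, 0 < γ k)
    (hstrong : ∀ k, StrongConvexOn Set.univ (γ k)
      (fun z : EuclideanSpace ℝ (Fin N) => g k z + ρ k / 2 * ‖z‖ ^ 2))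
    (hA2b : ∀ k, 2 * Lg k ^ 2 < ρ k * γ k)
    (hA2c : ∀ k, Lg k ≤ ρ k)
    -- Assumption A3 : `f` is bounded below over `X`
    (hbdd : BddBelow ((fun z => (∑ k, g k z) + h z) '' X))
    -- Algorithm 2
    (hC1 : C 1 = Finset.univ)
    (hx0upd : ∀ t : ℕ,
      (none ∈ C (t + 1) → x0 (t + 1) ∈ X ∧ ∀ z ∈ X,
        augL g h ρ (x t) (x0 (t + 1)) (y t) ≤ augL g h ρ (x t) z (y t)) ∧
      (none ∉ C (t + 1) → x0 (t + 1) = x0 t))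
    (hxupd : ∀ (t : ℕ) (k : Fin K),
      (some k ∈ C (t + 1) → ∀ z : EuclideanSpace ℝ (Fin N),
        g k (x (t + 1) k) + ⟪y t k, x (t + 1) k - x0 (t + 1)⟫
            + ρ k / 2 * ‖x (t + 1) k - x0 (t + 1)‖ ^ 2
          ≤ g k z + ⟪y t k, z - x0 (t + 1)⟫ + ρ k / 2 * ‖z - x0 (t + 1)‖ ^ 2) ∧
      (some k ∉ C (t + 1) → x (t + 1) k = x t k))
    (hyupd : ∀ (t : ℕ) (k : Fin K),
      (some k ∈ C (t + 1) → y (t + 1) k = y t k + ρ k • (x (t + 1) k - x0 (t + 1))) ∧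
      (some k ∉ C (t + 1) → y (t + 1) k = y t k))
    -- period-T essentially cyclic rule
    (T : ℕ) (hT : 1 ≤ T)
    (hcyc : ∀ (t : ℕ) (j : Option (Fin K)), ∃ i, 1 ≤ i ∧ i ≤ T ∧ j ∈ C (t + i))
    :
    (∀ k : Fin K,
      Tendsto (fun t : ℕ => ‖x (t + 1) k - x0 (t + 1)‖) atTop (nhds 0)) ∧
    (∀ k : Fin K,
      Tendsto (fun t : ℕ => ‖x (t + 1) k - x t k‖) atTop (nhds 0)) ∧
    Tendsto (fun t : ℕ => ‖x0 (t + 1) - x0 t‖) atTop (nhds 0) ∧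
    (∀ k : Fin K,
      Tendsto (fun t : ℕ => ‖y (t + 1) k - y t k‖) atTop (nhds 0)) :=
  theorem2_1_part1_general hK g g' h X Lg ρ γ x x0 y C hgrad hLpos hLip hconv hXcv hρ hstrong hA2b
    hA2c hbdd hC1 hx0upd hxupd hyupd T hcyc
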